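/- For any rapid weight function w on [0,∞), the associated weight satisfies P_w(t) ≤ w̃(t) ≤ 6·P_w(t) for all t ≥ 0. -/

import Mathlib

/-- The associated weight of a radial weight `w` on `ℂ`, as a function of `t = |z|`. -/
noncomputable def assocWeight (w : ℝ → ℝ) (t : ℝ) : ℝ :=
  sSup {y : ℝ | ∃ f : ℂ → ℂ, Differentiable ℂ f ∧
    (∀ z : ℂ, ‖f z‖ ≤ w ‖z‖) ∧ y = ‖f (t : ℂ)‖}

/-!
The lower bound holds because every monomial `z ^ k / u k` is dominated by `w`.

For the upper bound (with the Erdős–Kövári constant `3`) fix an entire `f` with `‖f‖ ≤ w` and a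
level `B` between `P_w(t)` and `w(t)`. Since `u k > t ^ k / B`, every exponent `k` has a radius `s`
with `w s < B (s / t) ^ k`; the largest `k` realised by some `s < t` gives radii `s₁ < t < s₂`
serving the consecutive exponents `k` and `k + 1`. The maximum principle for `f z / z ^ k` and
`f z / z ^ (k + 1)` on the annulus `s₁ < ‖z‖ < s₂` shows that, if `‖f t‖ > B`, both `s₁ / t` and
`t / s₂` are at most `B / ‖f t‖`. The Cauchy estimates on the two circles then bound the Taylor
series of `f` at `t` by two geometric series, which forces `‖f t‖ ≤ 3 B`.
-/

open Complex Metric Set Filter Topology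
open scoped Nat

theorem tsum_le_of_le_geometric {g : ℕ → ℝ} {a c x y : ℝ} (hg : ∀ n, 0 ≤ g n)
    (ha : ∀ n, g n ≤ a * x ^ n) (hc : ∀ n, g n ≤ c * y ^ n) (hx : 1 < x) (hy₀ : 0 ≤ y)
    (hy : y < 1) (k : ℕ) :
    ∑' n, g n ≤ a * x ^ k / (1 - x⁻¹) + c * y ^ (k + 1) / (1 - y) := by
  have hgeom : Summable fun n => y ^ n := summable_geometric_of_lt_one hy₀ hy
  have hsum : Summable g := .of_nonneg_of_le hg hc (hgeom.mul_left c)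
  have ha₀ : 0 ≤ a := by simpa using (hg 0).trans (ha 0)
  have hhead : ∑ n ∈ Finset.range (k + 1), g n ≤ a * x ^ k / (1 - x⁻¹) :=
    calc ∑ n ∈ Finset.range (k + 1), g n ≤ ∑ n ∈ Finset.range (k + 1), a * x ^ n :=
          Finset.sum_le_sum fun n _ => ha n
      _ = a * (x ^ (k + 1) - 1) / (x - 1) := by
          rw [← Finset.mul_sum, geom_sum_eq hx.ne', mul_div_assoc]
      _ ≤ a * x ^ (k + 1) / (x - 1) := by gcongr; linarith
      _ = a * x ^ k / (1 - x⁻¹) := by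
          have : x ≠ 0 := by positivity
          field_simp
          ring
  have htail : ∑' i, g (i + (k + 1)) ≤ c * y ^ (k + 1) / (1 - y) :=
    calc ∑' i, g (i + (k + 1)) ≤ ∑' i, c * y ^ (k + 1) * y ^ i :=
          Summable.tsum_le_tsum (fun i => (hc _).trans_eq (by ring))
            ((summable_nat_add_iff (k + 1)).2 hsum) (hgeom.mul_left _)
      _ = c * y ^ (k + 1) / (1 - y) := by
          rw [tsum_mul_left, tsum_geometric_of_lt_one hy₀ hy, div_eq_mul_inv]
  rw [← hsum.sum_add_tsum_nat_add (k + 1)]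
  exact add_le_add hhead htail

theorem le_mul_div_pow_iff {a B s t : ℝ} (hs : 0 < s) (ht : 0 < t) (k : ℕ) :
    a ≤ B * (s / t) ^ k ↔ a * (t / s) ^ k ≤ B := by
  rw [← le_div_iff₀ (by positivity), div_eq_mul_inv B, ← inv_pow, inv_div]

variable {E : Type*} [NormedAddCommGroup E] [NormedSpace ℂ E]

theorem norm_taylorTerm_le [CompleteSpace E] {f : ℂ → E} {c : ℂ} {R C : ℝ} (hR : 0 < R)
    (hf : DiffContOnCl ℂ f (ball c R)) (hC : ∀ z ∈ sphere c R, ‖f z‖ ≤ C) (n : ℕ) (z : ℂ) :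
    ‖(n ! : ℂ)⁻¹ • (z - c) ^ n • iteratedDeriv n f c‖ ≤ C * (‖z - c‖ / R) ^ n := by
  calc ‖(n ! : ℂ)⁻¹ • (z - c) ^ n • iteratedDeriv n f c‖
      = (n ! : ℝ)⁻¹ * ‖z - c‖ ^ n * ‖iteratedDeriv n f c‖ := by
        rw [norm_smul, norm_smul, norm_inv, norm_pow, Complex.norm_natCast, mul_assoc]
    _ ≤ (n ! : ℝ)⁻¹ * ‖z - c‖ ^ n * (n ! * C / R ^ n) := by
        gcongr
        exact norm_iteratedDeriv_le_of_forall_mem_sphere_norm_le n hR hf hC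
    _ = C * (‖z - c‖ / R) ^ n := by
        rw [div_pow]
        field_simp

theorem norm_le_max_of_mem_annulus {f : ℂ → E} (hf : Differentiable ℂ f) {s₁ s₂ M₁ M₂ : ℝ}
    (hs₁ : 0 < s₁) (hM₁ : ∀ z ∈ sphere (0 : ℂ) s₁, ‖f z‖ ≤ M₁)
    (hM₂ : ∀ z ∈ sphere (0 : ℂ) s₂, ‖f z‖ ≤ M₂) {z : ℂ} (hz₁ : s₁ < ‖z‖) (hz₂ : ‖z‖ < s₂)
    (k : ℕ) : ‖f z‖ ≤ max (M₁ * (‖z‖ / s₁) ^ k) (M₂ * (‖z‖ / s₂) ^ k) := by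
  have hs₂ : 0 < s₂ := hs₁.trans (hz₁.trans hz₂)
  set U : Set ℂ := norm ⁻¹' Ioo s₁ s₂
  have hclosure : closure U ⊆ norm ⁻¹' Icc s₁ s₂ :=
    closure_minimal (preimage_mono Ioo_subset_Icc_self) (isClosed_Icc.preimage continuous_norm)
  have hU : Bornology.IsBounded U :=
    (isBounded_ball (x := (0 : ℂ)) (r := s₂)).subset fun ζ hζ => mem_ball_zero_iff.2 hζ.2
  set g : ℂ → E := fun ζ => (ζ ^ k)⁻¹ • f ζ
  have hg : DiffContOnCl ℂ g U := DifferentiableOn.diffContOnCl fun ζ hζ => by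
    have hζ₀ : ζ ≠ 0 := norm_pos_iff.1 (hs₁.trans_le (hclosure hζ).1)
    exact (((differentiable_pow k ζ).inv (pow_ne_zero k hζ₀)).smul (hf ζ)).differentiableWithinAt
  have hnorm_g : ∀ ζ, ‖g ζ‖ = ‖f ζ‖ / ‖ζ‖ ^ k := fun ζ => by
    rw [norm_smul, norm_inv, norm_pow, inv_mul_eq_div]
  have hfrontier : ∀ ζ ∈ frontier U, ‖g ζ‖ ≤ max (M₁ / s₁ ^ k) (M₂ / s₂ ^ k) := by
    intro ζ hζ
    have hζ' := continuous_norm.frontier_preimage_subset _ hζ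
    rw [frontier_Ioo (hz₁.trans hz₂), mem_preimage, mem_insert_iff, mem_singleton_iff] at hζ'
    rw [hnorm_g]
    rcases hζ' with h | h
    · refine le_max_of_le_left ?_
      rw [h]
      exact div_le_div_of_nonneg_right (hM₁ ζ (mem_sphere_zero_iff_norm.2 h)) (by positivity)
    · refine le_max_of_le_right ?_
      rw [h]
      exact div_le_div_of_nonneg_right (hM₂ ζ (mem_sphere_zero_iff_norm.2 h)) (by positivity)
  have hz := norm_le_of_forall_mem_frontier_norm_le hU hg hfrontier (subset_closure ⟨hz₁, hz₂⟩)
  have hz₀ : 0 < ‖z‖ ^ k := pow_pos (hs₁.trans hz₁) k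
  rw [hnorm_g, div_le_iff₀ hz₀, max_mul_of_nonneg _ _ hz₀.le] at hz
  refine hz.trans_eq ?_
  congr 1 <;> ring

theorem norm_le_geometric_of_sphere_bounds [CompleteSpace E] {f : ℂ → E} (hf : Differentiable ℂ f)
    {s₁ s₂ M₁ M₂ : ℝ} (hs₁ : 0 < s₁) (hM₁ : ∀ z ∈ sphere (0 : ℂ) s₁, ‖f z‖ ≤ M₁)
    (hM₂ : ∀ z ∈ sphere (0 : ℂ) s₂, ‖f z‖ ≤ M₂) {z : ℂ} (hz₁ : s₁ < ‖z‖) (hz₂ : ‖z‖ < s₂)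
    (k : ℕ) :
    ‖f z‖ ≤ M₁ * (‖z‖ / s₁) ^ k / (1 - s₁ / ‖z‖) + M₂ * (‖z‖ / s₂) ^ (k + 1) / (1 - ‖z‖ / s₂) := by
  have hs₂ : 0 < s₂ := hs₁.trans (hz₁.trans hz₂)
  have hterm : ∀ {R M : ℝ}, 0 < R → (∀ z ∈ sphere (0 : ℂ) R, ‖f z‖ ≤ M) → ∀ n : ℕ,
      ‖(n ! : ℂ)⁻¹ • (z - 0) ^ n • iteratedDeriv n f 0‖ ≤ M * (‖z‖ / R) ^ n :=
    fun hR hM n => by simpa using norm_taylorTerm_le hR hf.diffContOnCl hM n z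
  have hratio₂ : ‖z‖ / s₂ < 1 := (div_lt_one hs₂).2 hz₂
  have hsummable := Summable.of_nonneg_of_le (fun n => norm_nonneg _) (hterm hs₂ hM₂)
    ((summable_geometric_of_lt_one (by positivity) hratio₂).mul_left M₂)
  calc ‖f z‖ ≤ ∑' n, ‖(n ! : ℂ)⁻¹ • (z - 0) ^ n • iteratedDeriv n f 0‖ :=
        (hasSum_taylorSeries_of_entire hf 0 z).norm_le_of_bounded hsummable.hasSum fun _ => le_rfl
    _ ≤ _ := by
        simpa only [inv_div] using tsum_le_of_le_geometric (fun n => norm_nonneg _)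
          (hterm hs₁ hM₁) (hterm hs₂ hM₂) ((one_lt_div hs₁).2 hz₁) (by positivity) hratio₂ k

theorem norm_le_three_mul_of_sphere_bounds [CompleteSpace E] {f : ℂ → E}
    (hf : Differentiable ℂ f) {s₁ s₂ M₁ M₂ B : ℝ} (hs₁ : 0 < s₁)
    (hM₁ : ∀ z ∈ sphere (0 : ℂ) s₁, ‖f z‖ ≤ M₁) (hM₂ : ∀ z ∈ sphere (0 : ℂ) s₂, ‖f z‖ ≤ M₂)
    {z : ℂ} (hz₁ : s₁ < ‖z‖) (hz₂ : ‖z‖ < s₂) {k : ℕ}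
    (hB₁ : M₁ * (‖z‖ / s₁) ^ k ≤ B) (hB₂ : M₂ * (‖z‖ / s₂) ^ (k + 1) ≤ B) :
    ‖f z‖ ≤ 3 * B := by
  set r := ‖z‖
  set A := ‖f z‖
  have hr : 0 < r := hs₁.trans hz₁
  have hs₂ : 0 < s₂ := hr.trans hz₂
  have hM₁₀ : 0 ≤ M₁ := (norm_nonneg _).trans (hM₁ s₁ (by simp [hs₁.le]))
  have hB₀ : 0 ≤ B := (mul_nonneg hM₁₀ (by positivity)).trans hB₁
  rcases le_or_gt A B with hAB | hBA
  · linarith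
  have hA : 0 < A := hB₀.trans_lt hBA
  -- Three circles at exponents `k + 1` and `k` confine the two radii far from `r`.
  have hinner : s₁ / r ≤ B / A := by
    have h := norm_le_max_of_mem_annulus hf hs₁ hM₁ hM₂ hz₁ hz₂ (k + 1)
    have h₁ : A ≤ M₁ * (r / s₁) ^ (k + 1) := by
      by_contra! h₁
      exact (h.trans_lt (max_lt h₁ (hB₂.trans_lt hBA))).false
    rw [pow_succ, ← mul_assoc] at h₁
    rw [div_le_div_iff₀ hr hA]
    calc s₁ * A ≤ s₁ * (M₁ * (r / s₁) ^ k * (r / s₁)) := by gcongr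
      _ = M₁ * (r / s₁) ^ k * r := by field_simp
      _ ≤ B * r := by gcongr
  have houter : r / s₂ ≤ B / A := by
    have h := norm_le_max_of_mem_annulus hf hs₁ hM₁ hM₂ hz₁ hz₂ k
    have h₂ : A ≤ M₂ * (r / s₂) ^ k := by
      by_contra! h₂
      exact (h.trans_lt (max_lt (hB₁.trans_lt hBA) h₂)).false
    rw [div_le_div_iff₀ hs₂ hA]
    calc r * A ≤ r * (M₂ * (r / s₂) ^ k) := by gcongr
      _ = M₂ * (r / s₂) ^ (k + 1) * s₂ := by rw [pow_succ]; field_simp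
      _ ≤ B * s₂ := by gcongr
  have hq : 0 < 1 - B / A := by rw [sub_pos, div_lt_one hA]; exact hBA
  have h := norm_le_geometric_of_sphere_bounds hf hs₁ hM₁ hM₂ hz₁ hz₂ k
  have h' : A ≤ B / (1 - B / A) + B / (1 - B / A) := by
    refine h.trans (add_le_add ?_ ?_) <;> gcongr
  rw [← add_div, le_div_iff₀ hq, mul_sub, mul_div_cancel₀ _ hA.ne'] at h'
  linarith

section MonomialEnvelope

variable {w : ℝ → ℝ} {u : ℕ → ℝ} {t c B : ℝ} {k : ℕ}

/-- The function `P_w` of the paper. -/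
noncomputable def monomialEnvelope (u : ℕ → ℝ) (t : ℝ) : ℝ := ⨆ k : ℕ, t ^ k / u k

theorem pow_div_le_of_mem_upperBounds
    (hc : c ∈ upperBounds {y : ℝ | ∃ t : ℝ, 0 ≤ t ∧ y = t ^ k / w t})
    (hc₀ : 0 < c) (ht : 0 ≤ t) (hwt : 0 < w t) : t ^ k / c ≤ w t := by
  rw [div_le_iff₀ hc₀, mul_comm, ← div_le_iff₀ hwt]
  exact hc ⟨t, ht, rfl⟩

theorem exists_lt_mul_div_pow_of_isLUB (hw : ∀ s, 0 ≤ s → 0 < w s)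
    (hu : IsLUB {y : ℝ | ∃ t : ℝ, 0 ≤ t ∧ y = t ^ k / w t} c) (hc : 0 < c) (ht : 0 < t)
    (hB : t ^ k / c < B) : ∃ s, 0 ≤ s ∧ w s < B * (s / t) ^ k := by
  have hB₀ : 0 < B := (by positivity : 0 < t ^ k / c).trans hB
  obtain ⟨_, ⟨s, hs, rfl⟩, hlt, -⟩ := hu.exists_between ((div_lt_comm₀ hc hB₀).1 hB)
  have hws := hw s hs
  refine ⟨s, hs, ?_⟩
  rw [div_lt_div_iff₀ hB₀ hws] at hlt
  rw [div_pow, mul_div_assoc', lt_div_iff₀ (by positivity)]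
  linarith

theorem le_monomialEnvelope (hu : ∀ k, IsLUB {y : ℝ | ∃ t : ℝ, 0 ≤ t ∧ y = t ^ k / w t} (u k))
    (hupos : ∀ k, 0 < u k) (ht : 0 ≤ t) (hwt : 0 < w t) (k : ℕ) :
    t ^ k / u k ≤ monomialEnvelope u t :=
  le_ciSup ⟨w t, by rintro _ ⟨j, rfl⟩; exact pow_div_le_of_mem_upperBounds (hu j).1 (hupos j) ht hwt⟩ k

theorem monomialEnvelope_nonneg (hupos : ∀ k, 0 < u k) (ht : 0 ≤ t) :
    0 ≤ monomialEnvelope u t :=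
  Real.iSup_nonneg fun k => div_nonneg (pow_nonneg ht k) (hupos k).le

theorem weight_zero_le_monomialEnvelope (hw : ∀ s, 0 ≤ s → 0 < w s)
    (hmono : MonotoneOn w (Ici 0))
    (hu : ∀ k, IsLUB {y : ℝ | ∃ t : ℝ, 0 ≤ t ∧ y = t ^ k / w t} (u k))
    (hupos : ∀ k, 0 < u k) (ht : 0 ≤ t) : w 0 ≤ monomialEnvelope u t := by
  have hu₀ : u 0 ≤ (w 0)⁻¹ := (hu 0).2 <| by
    rintro _ ⟨s, hs, rfl⟩
    rw [pow_zero, one_div]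
    exact inv_anti₀ (hw 0 le_rfl) (hmono self_mem_Ici hs hs)
  calc w 0 ≤ (u 0)⁻¹ := (le_inv_comm₀ (hupos 0) (hw 0 le_rfl)).1 hu₀
    _ = t ^ 0 / u 0 := by rw [pow_zero, one_div]
    _ ≤ monomialEnvelope u t := le_monomialEnvelope hu hupos ht (hw t ht) 0

theorem bddAbove_setOf_exists_le_mul_div_pow (hmono : MonotoneOn w (Ici 0)) (hw₀ : 0 < w 0)
    (hwt : ContinuousAt w t) (ht : 0 < t) (hB₀ : 0 ≤ B) (hBt : B < w t) :
    BddAbove {k : ℕ | ∃ s ∈ Ioo 0 t, w s ≤ B * (s / t) ^ k} := by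
  obtain ⟨l, hlt, hl⟩ := mem_nhdsLT_iff_exists_Ioo_subset.1
    (nhdsWithin_le_nhds (hwt.eventually (lt_mem_nhds hBt)))
  set q := max l 0 / t
  have hq₀ : 0 ≤ q := by positivity
  have hq₁ : q < 1 := (div_lt_one ht).2 (max_lt hlt ht)
  have hlim : Tendsto (fun k : ℕ => B * q ^ k) atTop (𝓝 0) := by
    simpa using (tendsto_pow_atTop_nhds_zero_of_lt_one hq₀ hq₁).const_mul B
  obtain ⟨N, hN⟩ := eventually_atTop.1 (hlim.eventually (gt_mem_nhds hw₀))
  refine ⟨N, fun k ⟨s, hs, hws⟩ => ?_⟩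
  by_contra! hk
  -- A radius with `w s ≤ B` lies left of the neighbourhood of `t` on which `w > B`.
  have hsl : s ≤ l := by
    by_contra! hls
    have hst : (s / t) ^ k ≤ 1 := pow_le_one₀ (div_pos hs.1 ht).le ((div_le_one ht).2 hs.2.le)
    exact (hl ⟨hls, hs.2⟩).not_ge (hws.trans (mul_le_of_le_one_right hB₀ hst))
  have : w 0 ≤ B * q ^ k :=
    calc w 0 ≤ w s := hmono self_mem_Ici hs.1.le hs.1.le
      _ ≤ B * (s / t) ^ k := hws
      _ ≤ B * q ^ k := by
        gcongr
        · exact (div_pos hs.1 ht).le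
        · exact div_le_div_of_nonneg_right (le_max_of_le_left hsl) ht.le
  exact (hN k hk.le).not_ge this

theorem exists_consecutive_exponent_radii (hw : ∀ s, 0 ≤ s → 0 < w s)
    (hmono : MonotoneOn w (Ici 0)) (hcont : ContinuousOn w (Ici 0))
    (hu : ∀ k, IsLUB {y : ℝ | ∃ t : ℝ, 0 ≤ t ∧ y = t ^ k / w t} (u k))
    (hupos : ∀ k, 0 < u k) (ht : 0 < t) (hB : ∀ k, t ^ k / u k < B) (hBt : B < w t) :
    ∃ k s₁ s₂, 0 < s₁ ∧ s₁ < t ∧ t < s₂ ∧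
      w s₁ * (t / s₁) ^ k ≤ B ∧ w s₂ * (t / s₂) ^ (k + 1) ≤ B := by
  set S := {k : ℕ | ∃ s ∈ Ioo 0 t, w s ≤ B * (s / t) ^ k}
  have hB₀ : 0 < B := (by simpa using inv_pos.2 (hupos 0) : 0 < t ^ 0 / u 0).trans (hB 0)
  have hS₀ : 0 ∈ S := by
    obtain ⟨s, hs, hws⟩ := exists_lt_mul_div_pow_of_isLUB hw (hu 0) (hupos 0) ht (hB 0)
    have hw₀ : w 0 < B := (hmono self_mem_Ici hs hs).trans_lt (by simpa using hws)
    have hlt : ∀ᶠ x in 𝓝[>] (0 : ℝ), x < t := nhdsWithin_le_nhds (Iio_mem_nhds ht)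
    have hsmall : ∀ᶠ x in 𝓝[>] 0, x < t ∧ w x < B := hlt.and
      (((hcont 0 self_mem_Ici).mono Ioi_subset_Ici_self).eventually (gt_mem_nhds hw₀))
    obtain ⟨x, ⟨hxt, hwx⟩, hx⟩ := (hsmall.and self_mem_nhdsWithin).exists
    exact ⟨x, ⟨hx, hxt⟩, by simpa using hwx.le⟩
  have hS : BddAbove S := bddAbove_setOf_exists_le_mul_div_pow hmono (hw 0 le_rfl)
    (hcont.continuousAt (Ici_mem_nhds ht)) ht hB₀.le hBt
  obtain ⟨s₁, ⟨hs₁, hs₁t⟩, hws₁⟩ : sSup S ∈ S := Nat.sSup_mem ⟨0, hS₀⟩ hS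
  have hnext : sSup S + 1 ∉ S := fun h => (Nat.lt_succ_self _).not_ge (le_csSup hS h)
  obtain ⟨s₂, hs₂, hws₂⟩ :=
    exists_lt_mul_div_pow_of_isLUB hw (hu _) (hupos _) ht (hB (sSup S + 1))
  have hts₂ : t < s₂ := by
    rcases lt_trichotomy s₂ t with hs₂t | rfl | hts₂
    · rcases hs₂.eq_or_lt with rfl | hs₂
      · simp [(hw 0 le_rfl).not_gt] at hws₂
      · exact (hnext ⟨s₂, ⟨hs₂, hs₂t⟩, hws₂.le⟩).elim
    · simp [ht.ne', hBt.not_gt] at hws₂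
    · exact hts₂
  exact ⟨sSup S, s₁, s₂, hs₁, hs₁t, hts₂, (le_mul_div_pow_iff hs₁ ht _).1 hws₁,
    (le_mul_div_pow_iff (ht.trans hts₂) ht _).1 hws₂.le⟩

theorem norm_le_three_mul_monomialEnvelope (hw : ∀ s, 0 ≤ s → 0 < w s)
    (hmono : MonotoneOn w (Ici 0)) (hcont : ContinuousOn w (Ici 0))
    (hu : ∀ k, IsLUB {y : ℝ | ∃ t : ℝ, 0 ≤ t ∧ y = t ^ k / w t} (u k))
    (hupos : ∀ k, 0 < u k) {f : ℂ → ℂ} (hf : Differentiable ℂ f)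
    (hfw : ∀ z, ‖f z‖ ≤ w ‖z‖) (ht : 0 ≤ t) : ‖f t‖ ≤ 3 * monomialEnvelope u t := by
  have hP₀ := monomialEnvelope_nonneg hupos ht
  have htn : ‖(t : ℂ)‖ = t := Complex.norm_of_nonneg ht
  have hft : ‖f t‖ ≤ w t := (hfw t).trans_eq (by rw [htn])
  rcases ht.eq_or_lt with rfl | ht
  · linarith [weight_zero_le_monomialEnvelope hw hmono hu hupos le_rfl]
  refine le_of_forall_gt_imp_ge_of_dense fun C hC => ?_
  rcases le_or_gt (w t) (C / 3) with hwC | hCw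
  · linarith
  have hB : ∀ k, t ^ k / u k < C / 3 := fun k =>
    (le_monomialEnvelope hu hupos ht.le (hw t ht.le) k).trans_lt (by linarith)
  obtain ⟨k, s₁, s₂, hs₁, hs₁t, hts₂, h₁, h₂⟩ :=
    exists_consecutive_exponent_radii hw hmono hcont hu hupos ht hB hCw
  have hsphere : ∀ s, ∀ z ∈ sphere (0 : ℂ) s, ‖f z‖ ≤ w s := fun s z hz =>
    mem_sphere_zero_iff_norm.1 hz ▸ hfw z
  rw [← htn] at hs₁t hts₂ h₁ h₂
  linarith [norm_le_three_mul_of_sphere_bounds hf hs₁ (hsphere s₁) (hsphere s₂) hs₁t hts₂ h₁ h₂]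

theorem monomialEnvelope_le_assocWeight (hw : ∀ s, 0 ≤ s → 0 < w s)
    (hu : ∀ k, IsLUB {y : ℝ | ∃ t : ℝ, 0 ≤ t ∧ y = t ^ k / w t} (u k))
    (hupos : ∀ k, 0 < u k) (ht : 0 ≤ t) : monomialEnvelope u t ≤ assocWeight w t := by
  have htn : ‖(t : ℂ)‖ = t := Complex.norm_of_nonneg ht
  have hbdd : BddAbove {y : ℝ | ∃ f : ℂ → ℂ, Differentiable ℂ f ∧
      (∀ z : ℂ, ‖f z‖ ≤ w ‖z‖) ∧ y = ‖f (t : ℂ)‖} :=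
    ⟨w t, by rintro _ ⟨f, -, hfw, rfl⟩; exact (hfw t).trans_eq (by rw [htn])⟩
  have hnorm : ∀ (k : ℕ) (z : ℂ), ‖z ^ k / (u k : ℂ)‖ = ‖z‖ ^ k / u k := fun k z => by
    rw [norm_div, norm_pow, Complex.norm_of_nonneg (hupos k).le]
  refine ciSup_le fun k => le_csSup hbdd
    ⟨fun z => z ^ k / (u k : ℂ), (differentiable_pow k).div_const _, fun z => ?_, ?_⟩
  · rw [hnorm]
    exact pow_div_le_of_mem_upperBounds (hu k).1 (hupos k) (norm_nonneg z) (hw _ (norm_nonneg z))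
  · rw [hnorm, htn]

theorem assocWeight_le_three_mul_monomialEnvelope (hw : ∀ s, 0 ≤ s → 0 < w s)
    (hmono : MonotoneOn w (Ici 0)) (hcont : ContinuousOn w (Ici 0))
    (hu : ∀ k, IsLUB {y : ℝ | ∃ t : ℝ, 0 ≤ t ∧ y = t ^ k / w t} (u k))
    (hupos : ∀ k, 0 < u k) (ht : 0 ≤ t) : assocWeight w t ≤ 3 * monomialEnvelope u t :=
  Real.sSup_le (by
    rintro _ ⟨f, hf, hfw, rfl⟩
    exact norm_le_three_mul_monomialEnvelope hw hmono hcont hu hupos hf hfw ht)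
    (by linarith [monomialEnvelope_nonneg hupos ht])

end MonomialEnvelope

theorem assocWeight_comparable_monomial_envelope_general (w : ℝ → ℝ)
    (hw : ∀ t : ℝ, 0 ≤ t → 0 < w t)
    (hmono : MonotoneOn w (Set.Ici 0)) (hcont : ContinuousOn w (Set.Ici 0))
    (u : ℕ → ℝ)
    (hu : ∀ k : ℕ, IsLUB {y : ℝ | ∃ t : ℝ, 0 ≤ t ∧ y = t ^ k / w t} (u k))
    (hupos : ∀ k : ℕ, 0 < u k) :
    ∀ t : ℝ, 0 ≤ t →
      (⨆ k : ℕ, t ^ k / u k) ≤ assocWeight w t ∧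
      assocWeight w t ≤ 6 * ⨆ k : ℕ, t ^ k / u k := by
  intro t ht
  have hlower := monomialEnvelope_le_assocWeight hw hu hupos ht
  have hupper := assocWeight_le_three_mul_monomialEnvelope hw hmono hcont hu hupos ht
  have hnonneg := monomialEnvelope_nonneg hupos ht
  unfold monomialEnvelope at hlower hupper hnonneg
  exact ⟨hlower, by linarith⟩

/-- For any rapid weight function `w` on `[0,∞)`, the associated weight
satisfies `P_w(t) ≤ w̃(t) ≤ 6·P_w(t)` for all `t ≥ 0`, where `u_k = sup_{t≥0} t^k/w(t)`
and `P_w(t) = sup_k t^k/u_k`. -/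
theorem assocWeight_comparable_monomial_envelope (w : ℝ → ℝ)
    (hw : ∀ t : ℝ, 0 ≤ t → 0 < w t)
    (hmono : MonotoneOn w (Set.Ici 0)) (hcont : ContinuousOn w (Set.Ici 0))
    (hunb : ∀ M : ℝ, ∃ t : ℝ, 0 ≤ t ∧ M < w t)
    (hrapid : ∀ k : ℕ, Filter.Tendsto (fun t : ℝ => w t / t ^ k)
      Filter.atTop Filter.atTop)
    (u : ℕ → ℝ)
    (hu : ∀ k : ℕ, IsLUB {y : ℝ | ∃ t : ℝ, 0 ≤ t ∧ y = t ^ k / w t} (u k))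
    (hupos : ∀ k : ℕ, 0 < u k) :
    ∀ t : ℝ, 0 ≤ t →
      (⨆ k : ℕ, t ^ k / u k) ≤ assocWeight w t ∧
      assocWeight w t ≤ 6 * ⨆ k : ℕ, t ^ k / u k :=
  assocWeight_comparable_monomial_envelope_general w hw hmono hcont u hu hupos
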